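/- Let X be a geodesic metric space and γ a local geodesic in X. If X is CAT(0), then every local geodesic in X is a (global) geodesic. -/
import Mathlib


open Set Metric
open scoped Classical

/-- A geodesic segment from `x` to `y`, parameterized by arclength on `[0, dist x y]`. -/
def IsGeodSeg {X : Type*} [MetricSpace X] (γ : ℝ → X) (x y : X) : Prop :=
  γ 0 = x ∧ γ (dist x y) = y ∧
    ∀ s ∈ Set.Icc (0:ℝ) (dist x y), ∀ t ∈ Set.Icc (0:ℝ) (dist x y),
      dist (γ s) (γ t) = |s - t|

/-- A geodesic metric space: any two points are joined by a geodesic segment. -/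
def GeodesicSpace (X : Type*) [MetricSpace X] : Prop :=
  ∀ x y : X, ∃ γ : ℝ → X, IsGeodSeg γ x y

/-- Inverse hyperbolic cosine. -/
noncomputable def arcosh (x : ℝ) : ℝ := Real.log (x + Real.sqrt (x ^ 2 - 1))

/-- The cosine of the angle opposite the side of length `a` in a triangle with side
lengths `a`, `b`, `c` in the model space `M_κ` of constant curvature `κ`
(law of cosines in constant curvature). -/
noncomputable def modelCosAngle (κ a b c : ℝ) : ℝ :=
  if κ = 0 then (b ^ 2 + c ^ 2 - a ^ 2) / (2 * b * c)
  else if κ < 0 then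
    (Real.cosh (Real.sqrt (-κ) * b) * Real.cosh (Real.sqrt (-κ) * c) -
        Real.cosh (Real.sqrt (-κ) * a)) /
      (Real.sinh (Real.sqrt (-κ) * b) * Real.sinh (Real.sqrt (-κ) * c))
  else
    (Real.cos (Real.sqrt κ * a) - Real.cos (Real.sqrt κ * b) * Real.cos (Real.sqrt κ * c)) /
      (Real.sin (Real.sqrt κ * b) * Real.sin (Real.sqrt κ * c))

/-- Distance in the model space `M_κ` between the points at distances `t`, `u` from a
vertex along two geodesics making an angle with cosine `cosθ` (law of cosines). -/
noncomputable def modelDist (κ t u cosθ : ℝ) : ℝ :=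
  if κ = 0 then Real.sqrt (t ^ 2 + u ^ 2 - 2 * t * u * cosθ)
  else if κ < 0 then
    (1 / Real.sqrt (-κ)) *
      arcosh (Real.cosh (Real.sqrt (-κ) * t) * Real.cosh (Real.sqrt (-κ) * u) -
        Real.sinh (Real.sqrt (-κ) * t) * Real.sinh (Real.sqrt (-κ) * u) * cosθ)
  else
    (1 / Real.sqrt κ) *
      Real.arccos (Real.cos (Real.sqrt κ * t) * Real.cos (Real.sqrt κ * u) +
        Real.sin (Real.sqrt κ * t) * Real.sin (Real.sqrt κ * u) * cosθ)

/-- Perimeter restriction: triangles of perimeter `< 2 D_κ`, where `D_κ = π/√κ` for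
`κ > 0` and `D_κ = ∞` for `κ ≤ 0`. -/
def PerimOK (κ a b c : ℝ) : Prop := κ ≤ 0 ∨ a + b + c < 2 * (Real.pi / Real.sqrt κ)

/-- `X` is a CAT(κ) space: it is `D_κ`-geodesic, and every geodesic triangle of
perimeter `< 2 D_κ` satisfies the comparison inequality with its comparison triangle in
the model space `M_κ` (expressed via the law of cosines at each vertex: the distance
between two points on the two sides issuing from a vertex is at most the distance between
the corresponding comparison points in `M_κ`). -/
def IsCAT (κ : ℝ) (X : Type*) [MetricSpace X] : Prop :=
  (∀ x y : X, (κ ≤ 0 ∨ dist x y < Real.pi / Real.sqrt κ) → ∃ γ : ℝ → X, IsGeodSeg γ x y) ∧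
  ∀ (p x y : X) (g1 g2 : ℝ → X), IsGeodSeg g1 p x → IsGeodSeg g2 p y →
    PerimOK κ (dist x y) (dist p x) (dist p y) →
    ∀ t ∈ Set.Icc (0:ℝ) (dist p x), ∀ u ∈ Set.Icc (0:ℝ) (dist p y),
      dist (g1 t) (g2 u) ≤ modelDist κ t u (modelCosAngle κ (dist x y) (dist p x) (dist p y))

/-- Helper: upgrade an ordered geodesic equation to the symmetric `|s - t|` form. -/
lemma symmWrap {X : Type*} [MetricSpace X] (γ : ℝ → X) (a U : ℝ)
    (h : ∀ s t : ℝ, a ≤ s → s ≤ t → t ≤ U → dist (γ s) (γ t) = t - s) :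
    ∀ s ∈ Set.Icc a U, ∀ t ∈ Set.Icc a U, dist (γ s) (γ t) = |s - t| := by
  intro s hs t ht
  rcases le_total s t with hst | hst
  · rw [h s t hs.1 hst ht.2, abs_of_nonpos (by linarith)]; ring
  · rw [dist_comm, h t s ht.1 hst hs.2, abs_of_nonneg (by linarith)]

set_option maxHeartbeats 2000000 in
/-- In a CAT(0) space every local geodesic is a (global) geodesic. -/
theorem stmt_17 {X : Type*} [MetricSpace X] (hX : IsCAT 0 X) (a b : ℝ) (γ : ℝ → X)
    (hloc : ∀ t ∈ Set.Icc a b, ∃ ε > 0,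
      ∀ s ∈ Set.Icc a b ∩ Set.Icc (t - ε) (t + ε),
        ∀ u ∈ Set.Icc a b ∩ Set.Icc (t - ε) (t + ε), dist (γ s) (γ u) = |s - u|) :
    ∀ s ∈ Set.Icc a b, ∀ t ∈ Set.Icc a b, dist (γ s) (γ t) = |s - t| := by
  rcases le_or_gt a b with hab | hab
  swap
  · intro s hs
    exact absurd (hs.1.trans hs.2) (not_le.mpr hab)
  set S : Set ℝ := {T | T ∈ Set.Icc a b ∧
    ∀ s ∈ Set.Icc a T, ∀ t ∈ Set.Icc a T, dist (γ s) (γ t) = |s - t|} with hS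
  have haS : a ∈ S := by
    refine ⟨⟨le_refl a, hab⟩, ?_⟩
    intro s hs t ht
    have hsa : s = a := le_antisymm hs.2 hs.1
    have hta : t = a := le_antisymm ht.2 ht.1
    simp [hsa, hta]
  have hne : S.Nonempty := ⟨a, haS⟩
  have hbdd : BddAbove S := ⟨b, fun x hx => hx.1.2⟩
  set T := sSup S with hT
  have haT : a ≤ T := le_csSup hbdd haS
  have hTb : T ≤ b := csSup_le hne (fun x hx => hx.1.2)
  obtain ⟨ε, hε, hwin⟩ := hloc T ⟨haT, hTb⟩
  -- γ is a geodesic on [a, T]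
  have keyT : ∀ s t : ℝ, a ≤ s → s ≤ t → t ≤ T → dist (γ s) (γ t) = t - s := by
    intro s t has hst htT
    rcases lt_or_eq_of_le htT with htT' | rfl
    · obtain ⟨x, hxS, hx⟩ := exists_lt_of_lt_csSup hne htT'
      have := hxS.2 s ⟨has, by linarith⟩ t ⟨by linarith, hx.le⟩
      rw [this, abs_of_nonpos (by linarith)]; ring
    · -- t = T : limiting argument
      rcases eq_or_lt_of_le hst with rfl | hst'
      · simp
      have key : ∀ η : ℝ, 0 < η → |dist (γ s) (γ T) - (T - s)| ≤ η := by
        intro η hη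
        set m : ℝ := max (max s (T - ε)) (T - η / 4) with hm
        have hmt : m < T := by
          apply max_lt (max_lt hst' (by linarith)) (by linarith)
        set t' : ℝ := (m + T) / 2 with ht'
        have hmt' : m < t' := by rw [ht']; linarith
        have ht't : t' < T := by rw [ht']; linarith
        have hst'' : s < t' := lt_of_le_of_lt (le_max_of_le_left (le_max_left _ _)) hmt'
        have htε : T - ε ≤ t' := le_trans (le_max_of_le_left (le_max_right _ _)) hmt'.le
        have htη : T - η / 4 ≤ t' := le_trans (le_max_right _ _) hmt'.le
        -- dist (γ s) (γ t') = t' - s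
        obtain ⟨x, hxS, hx⟩ := exists_lt_of_lt_csSup hne ht't
        have h1 : dist (γ s) (γ t') = t' - s := by
          have := hxS.2 s ⟨has, by linarith⟩ t' ⟨by linarith, hx.le⟩
          rw [this, abs_of_nonpos (by linarith)]; ring
        -- dist (γ t') (γ T) = T - t'
        have h2 : dist (γ t') (γ T) = T - t' := by
          have := hwin t' ⟨⟨by linarith, by linarith⟩, ⟨htε, by linarith⟩⟩
            T ⟨⟨haT, hTb⟩, ⟨by linarith, by linarith⟩⟩
          rw [this, abs_of_nonpos (by linarith)]; ring
        have hup : dist (γ s) (γ T) ≤ T - s := by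
          calc dist (γ s) (γ T) ≤ dist (γ s) (γ t') + dist (γ t') (γ T) := dist_triangle _ _ _
            _ = T - s := by rw [h1, h2]; ring
        have hlo : t' - s ≤ dist (γ s) (γ T) + (T - t') := by
          calc t' - s = dist (γ s) (γ t') := h1.symm
            _ ≤ dist (γ s) (γ T) + dist (γ T) (γ t') := dist_triangle _ _ _
            _ = dist (γ s) (γ T) + (T - t') := by rw [dist_comm (γ T), h2]
        rw [abs_le]
        constructor <;> linarith
      have h0 : |dist (γ s) (γ T) - (T - s)| ≤ 0 := le_of_forall_pos_le_add (by
        intro η hη; simpa using key η hη)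
      have h0' := abs_nonneg (dist (γ s) (γ T) - (T - s))
      have heq0 : |dist (γ s) (γ T) - (T - s)| = 0 := le_antisymm h0 h0'
      have := abs_eq_zero.mp heq0
      linarith
  have hmemT : T ∈ S := ⟨⟨haT, hTb⟩, symmWrap γ a T keyT⟩
  -- If T = b we are done; otherwise extend, contradiction.
  rcases eq_or_lt_of_le hTb with heqb | hTb'
  · rw [← heqb]; exact hmemT.2
  exfalso
  rcases eq_or_lt_of_le haT with heqa | haT'
  · -- T = a : extend directly using the local window at a
    set δ' : ℝ := min ε (b - T) with hδ'
    have hδ'pos : 0 < δ' := lt_min hε (by linarith)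
    have heqa' : a = T := heqa
    have heqa' : a = T := heqa
    have hmem : T + δ' ∈ S := by
      refine ⟨⟨by linarith, by have := min_le_right ε (b - T); linarith⟩, ?_⟩
      apply symmWrap
      intro s t hs hst ht
      have hδε : δ' ≤ ε := min_le_left _ _
      have hδb : δ' ≤ b - T := min_le_right _ _
      have := hwin s ⟨⟨hs, by linarith⟩, ⟨by linarith, by linarith⟩⟩
        t ⟨⟨by linarith, by linarith⟩, ⟨by linarith, by linarith⟩⟩
      rw [this, abs_of_nonpos (by linarith)]; ring
    have := le_csSup hbdd hmem
    linarith
  · -- a < T : comparison argument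
    set δ : ℝ := min ε (T - a) with hδ
    set δ' : ℝ := min ε (b - T) with hδ'
    have hδpos : 0 < δ := lt_min hε (by linarith)
    have hδ'pos : 0 < δ' := lt_min hε (by linarith)
    have hδε : δ ≤ ε := min_le_left _ _
    have hδa : δ ≤ T - a := min_le_right _ _
    have hδ'ε : δ' ≤ ε := min_le_left _ _
    have hδ'b : δ' ≤ b - T := min_le_right _ _
    set p : X := γ T with hp
    set x : X := γ a with hx
    set y : X := γ (T + δ') with hy
    have hpx : dist p x = T - a := by
      rw [hp, hx, dist_comm]
      exact keyT a T le_rfl haT le_rfl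
    have hTmem : T ∈ Set.Icc a b ∩ Set.Icc (T - ε) (T + ε) :=
      ⟨⟨haT, hTb⟩, ⟨by linarith, by linarith⟩⟩
    have hTδ'mem : T + δ' ∈ Set.Icc a b ∩ Set.Icc (T - ε) (T + ε) :=
      ⟨⟨by linarith, by linarith⟩, ⟨by linarith, by linarith⟩⟩
    have hpy : dist p y = δ' := by
      have h := hwin T hTmem (T + δ') hTδ'mem
      rw [hp, hy, h, abs_of_nonpos (by linarith)]
      try ring
    set g1 : ℝ → X := fun t => γ (T - t) with hg1def
    set g2 : ℝ → X := fun u => γ (T + u) with hg2def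
    have hg1 : IsGeodSeg g1 p x := by
      refine ⟨by simp [hg1def, hp], by rw [hpx]; simp [hg1def, hx], ?_⟩
      rw [hpx]
      intro s hs t ht
      have := keyT (T - max s t) (T - min s t) (by rcases le_total s t with h | h <;>
        simp [max_eq_right h, max_eq_left h] <;> linarith [hs.2, ht.2, hs.1, ht.1])
        (by rcases le_total s t with h | h <;>
          simp [max_eq_right h, max_eq_left h, min_eq_left h, min_eq_right h] <;> linarith)
        (by rcases le_total s t with h | h <;>
          simp [min_eq_left h, min_eq_right h] <;> linarith [hs.1, ht.1])
      rcases le_total s t with h | h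
      · rw [hg1def]
        simp only [max_eq_right h, min_eq_left h] at this
        rw [dist_comm] at this
        rw [this, abs_of_nonpos (by linarith)]; ring
      · rw [hg1def]
        simp only [max_eq_left h, min_eq_right h] at this
        rw [this, abs_of_nonneg (by linarith)]; ring
    have hg2 : IsGeodSeg g2 p y := by
      refine ⟨by simp [hg2def, hp], by rw [hpy]; try simp [hg2def, hy], ?_⟩
      rw [hpy]
      intro s hs t ht
      have := hwin (T + s) ⟨⟨by linarith [hs.1], by linarith [hs.2]⟩,
          ⟨by linarith [hs.1], by linarith [hs.2]⟩⟩
        (T + t) ⟨⟨by linarith [ht.1], by linarith [ht.2]⟩,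
          ⟨by linarith [ht.1], by linarith [ht.2]⟩⟩
      rw [hg2def]; simp only []
      rw [this]
      congr 1
      ring
    have hcmp := hX.2 p x y g1 g2 hg1 hg2 (Or.inl le_rfl)
    rw [hpx, hpy] at hcmp
    set A : ℝ := dist x y with hA
    set B : ℝ := T - a with hB
    have hBpos : 0 < B := by rw [hB]; linarith
    set C : ℝ := modelCosAngle 0 A B δ' with hC
    have hCdef : C = (B ^ 2 + δ' ^ 2 - A ^ 2) / (2 * B * δ') := by
      rw [hC]; simp [modelCosAngle]
    have hcmp' : ∀ t ∈ Set.Icc (0:ℝ) B, ∀ u ∈ Set.Icc (0:ℝ) δ',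
        dist (g1 t) (g2 u) ≤ Real.sqrt (t ^ 2 + u ^ 2 - 2 * t * u * C) := by
      intro t ht u hu
      have := hcmp t ht u hu
      rwa [show modelDist 0 t u (modelCosAngle 0 A B δ')
        = Real.sqrt (t ^ 2 + u ^ 2 - 2 * t * u * C) by rw [← hC]; simp [modelDist]] at this
    -- Step: dist (γ (T - δ)) (γ (T + δ')) = δ + δ'
    have hstraight : dist (g1 δ) (g2 δ') = δ + δ' := by
      have := hwin (T - δ) ⟨⟨by linarith, by linarith⟩, ⟨by linarith, by linarith⟩⟩
        (T + δ') hTδ'mem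
      rw [hg1def, hg2def]
      rw [this, abs_of_nonpos (by linarith)]; ring
    have hCle : C ≤ -1 := by
      have h1 := hcmp' δ ⟨hδpos.le, by rw [hB]; linarith⟩ δ' ⟨hδ'pos.le, le_refl _⟩
      rw [hstraight] at h1
      set E : ℝ := δ ^ 2 + δ' ^ 2 - 2 * δ * δ' * C with hE
      rcases le_or_gt 0 E with hE0 | hE0
      · have h2 : (δ + δ') ^ 2 ≤ E := by
          have := Real.sq_sqrt hE0
          nlinarith [Real.sqrt_nonneg E]
        nlinarith [mul_pos hδpos hδ'pos]
      · rw [Real.sqrt_eq_zero_of_nonpos hE0.le] at h1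
        linarith
    have hCge : -1 ≤ C := by
      have htri : A ≤ B + δ' := by
        calc A ≤ dist x p + dist p y := dist_triangle _ _ _
          _ = B + δ' := by rw [dist_comm x p, hpx, hpy]
      have hA0 : 0 ≤ A := dist_nonneg
      rw [hCdef, le_div_iff₀ (mul_pos (mul_pos two_pos hBpos) hδ'pos)]
      nlinarith
    have hCeq : C = -1 := le_antisymm hCle hCge
    have hAeq : A = B + δ' := by
      have hnum : B ^ 2 + δ' ^ 2 - A ^ 2 = -1 * (2 * B * δ') := by
        have hden : (2 * B * δ') ≠ 0 :=
          ne_of_gt (mul_pos (mul_pos two_pos hBpos) hδ'pos)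
        have h := hCdef.symm.trans hCeq
        rw [div_eq_iff hden] at h
        linarith
      have hA0 : 0 ≤ A := dist_nonneg
      have hBδ : (0:ℝ) ≤ B + δ' := by linarith
      have h2 : A ^ 2 = (B + δ') ^ 2 := by linarith [sq_nonneg (B + δ')]
      have h3 : A = Real.sqrt (A ^ 2) := (Real.sqrt_sq hA0).symm
      rw [h3, h2, Real.sqrt_sq hBδ]
    -- equality on the whole bridge
    have hbridge : ∀ t ∈ Set.Icc (0:ℝ) B, ∀ u ∈ Set.Icc (0:ℝ) δ',
        dist (γ (T - t)) (γ (T + u)) = t + u := by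
      intro t ht u hu
      have hub : dist (g1 t) (g2 u) ≤ t + u := by
        have := hcmp' t ht u hu
        rw [hCeq] at this
        calc dist (g1 t) (g2 u) ≤ Real.sqrt (t ^ 2 + u ^ 2 - 2 * t * u * (-1)) := this
          _ = Real.sqrt ((t + u) ^ 2) := by ring_nf
          _ = t + u := Real.sqrt_sq (by linarith [ht.1, hu.1])
      have hxg1 : dist x (g1 t) = B - t := by
        have := keyT a (T - t) (le_refl a) (by rw [hB] at ht; linarith [ht.2])
          (by linarith [ht.1])
        rw [hg1def, hx, this, hB]; ring
      have hg2y : dist (g2 u) y = δ' - u := by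
        have := hwin (T + u) ⟨⟨by linarith [hu.1], by linarith [hu.2]⟩,
            ⟨by linarith [hu.1], by linarith [hu.2]⟩⟩ (T + δ') hTδ'mem
        rw [hg2def, hy, this, abs_of_nonpos (by linarith [hu.2])]; ring
      have hlb : t + u ≤ dist (g1 t) (g2 u) := by
        have h3 : A ≤ dist x (g1 t) + dist (g1 t) (g2 u) + dist (g2 u) y :=
          dist_triangle4 _ _ _ _
        rw [hxg1, hg2y, hAeq] at h3
        linarith
      have : dist (g1 t) (g2 u) = t + u := le_antisymm hub hlb
      rw [hg1def, hg2def] at this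
      exact this
    -- T + δ' ∈ S
    have hmem : T + δ' ∈ S := by
      refine ⟨⟨by linarith, by linarith⟩, ?_⟩
      apply symmWrap
      intro s t hs hst ht
      rcases le_total t T with htT | htT
      · exact keyT s t hs hst htT
      rcases le_total s T with hsT | hsT
      · have := hbridge (T - s) ⟨by linarith, by rw [hB]; linarith⟩
          (t - T) ⟨by linarith, by linarith⟩
        rw [show T - (T - s) = s by ring, show T + (t - T) = t by ring] at this
        rw [this]; ring
      · have := hwin s ⟨⟨by linarith, by linarith⟩, ⟨by linarith, by linarith⟩⟩
          t ⟨⟨by linarith, by linarith⟩, ⟨by linarith, by linarith⟩⟩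
        rw [this, abs_of_nonpos (by linarith)]; ring
    have := le_csSup hbdd hmem
    linarith
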